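/- Let q be an odd prime power, n = 2t with t ≥ 3, 1 ≤ k < t with gcd(k, 2t) = 1, and suppose ψ^{(k)} is scattered. Let W = {x ∈ F_{q^n} : x + x^{q^t} = 0}. If x ∈ F_{q^n} satisfies ψ^{(k)}(x)/x ∈ F_{q^t} and x ≠ 0, then x ∈ F_{q^t} or x ∈ W. -/

import Mathlib

/-!
Conjugation `σ : x ↦ x ^ q ^ t` is a field automorphism of order two commuting with `ψ`, so if
`ψ x / x` is `σ`-fixed then `x` and `σ x` have the same `ψ`-ratio. Scatteredness makes
`σ x = c * x` with `c ∈ 𝔽_q`; applying `σ` again gives `x = c ^ 2 * x`, hence `c = ±1`.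
-/

/-- A divisor of the order of a finite field is a power of its characteristic, so `a ↦ a ^ d` is an
iterated Frobenius. -/
theorem FiniteField.exists_ringHom_eq_pow_of_dvd_card {F : Type*} [Field F] [Fintype F] {d : ℕ}
    (hd : d ∣ Fintype.card F) : ∃ σ : F →+* F, ∀ a, σ a = a ^ d := by
  obtain ⟨p, hchar, n, hp, hcard⟩ := FiniteField.card' F
  obtain ⟨j, -, rfl⟩ := (Nat.dvd_prime_pow hp).mp (hcard ▸ hd)
  have : Fact p.Prime := ⟨hp⟩
  exact ⟨iterateFrobenius F p j, iterateFrobenius_def p j⟩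

def psi {F : Type*} [Field F] (q t k : ℕ) (x : F) : F :=
  (x ^ q ^ k + x ^ q ^ (t - k) - x ^ q ^ (t + k) + x ^ q ^ (2 * t - k)) / 2

theorem psi_map {F : Type*} [Field F] (q t k : ℕ) (σ : F →+* F) (x : F) :
    psi q t k (σ x) = σ (psi q t k x) := by
  simp only [psi, map_div₀, map_add, map_sub, map_pow, map_ofNat]

theorem pow_pow_eq_self_of_pow_eq_self {M : Type*} [Monoid M] {q : ℕ} {c : M} (hc : c ^ q = c)
    (s : ℕ) : c ^ q ^ s = c := by
  induction s with
  | zero => simp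
  | succ s ih => rw [pow_succ, pow_mul, ih, hc]

theorem pow_eq_self_or_neg_of_pow_eq_mul {F : Type*} [Field F] {q t : ℕ} {x c : F} (hx : x ≠ 0)
    (hinv : (x ^ q ^ t) ^ q ^ t = x) (hc : c ^ q = c) (hxc : x ^ q ^ t = c * x) :
    x ^ q ^ t = x ∨ x ^ q ^ t = -x := by
  have hcc : c * c = 1 := by
    refine mul_right_cancel₀ hx ?_
    calc c * c * x = (c * x) ^ q ^ t := by
          rw [mul_pow, pow_pow_eq_self_of_pow_eq_self hc, hxc, mul_assoc]
      _ = x := by rw [← hxc, hinv]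
      _ = 1 * x := (one_mul x).symm
  rcases mul_self_eq_one_iff.mp hcc with rfl | rfl
  · exact Or.inl (by rw [hxc, one_mul])
  · exact Or.inr (by rw [hxc, neg_one_mul])

theorem stmt_16_general (q t k : ℕ)
    (F : Type) [Field F] [Fintype F] (hF : Fintype.card F = q ^ (2 * t))
    (ψk : F → F)
    (hψk : ∀ x : F, ψk x = (x ^ q ^ k + x ^ q ^ (t - k)
      - x ^ q ^ (t + k) + x ^ q ^ (2 * t - k)) / 2)
    (hscat : ∀ y z : F, y ≠ 0 → z ≠ 0 → ψk y / y = ψk z / z →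
      ∃ c : F, c ^ q = c ∧ z = c * y) :
    ∀ x : F, x ≠ 0 → (ψk x / x) ^ q ^ t = ψk x / x →
      x ^ q ^ t = x ∨ x ^ q ^ t = -x := by
  intro x hx hfix
  obtain ⟨σ, hσ⟩ := FiniteField.exists_ringHom_eq_pow_of_dvd_card (F := F) (d := q ^ t)
    (hF ▸ pow_dvd_pow q (by omega))
  have hψ : ψk = psi q t k := funext hψk
  have hratio : ψk x / x = ψk (x ^ q ^ t) / x ^ q ^ t := by
    rw [hψ, ← hσ, psi_map, ← map_div₀, hσ, ← hψ, hfix]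
  obtain ⟨c, hc, hxc⟩ := hscat x _ hx (pow_ne_zero _ hx) hratio
  refine pow_eq_self_or_neg_of_pow_eq_mul hx ?_ hc hxc
  rw [← pow_mul, ← pow_add, ← two_mul, ← hF, FiniteField.pow_card]

theorem stmt_16 (p r q t k : ℕ) (hp : p.Prime) (hpodd : Odd p) (hr : 0 < r)
    (hq : q = p ^ r) (ht : 3 ≤ t) (hk1 : 1 ≤ k) (hk2 : k < t)
    (hgcd : Nat.gcd k (2 * t) = 1)
    (F : Type) [Field F] [Fintype F] (hF : Fintype.card F = q ^ (2 * t))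
    (ψk : F → F)
    (hψk : ∀ x : F, ψk x = (x ^ q ^ k + x ^ q ^ (t - k)
      - x ^ q ^ (t + k) + x ^ q ^ (2 * t - k)) / 2)
    (hscat : ∀ y z : F, y ≠ 0 → z ≠ 0 → ψk y / y = ψk z / z →
      ∃ c : F, c ^ q = c ∧ z = c * y) :
    ∀ x : F, x ≠ 0 → (ψk x / x) ^ q ^ t = ψk x / x →
      x ^ q ^ t = x ∨ x ^ q ^ t = -x :=
  stmt_16_general q t k F hF ψk hψk hscat
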